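/- arXiv:2102.12680 — 2 statements merged into one kernel-verified Lean document; each statement's English description precedes it below -/
import Mathlib

section
/- Sufficiency for perfect calibration (Theorem 1): if for every bin index j ∈ {1, …, J} the bin-conditional average confidence matches the transformation decomposition, i.e. E_μ[g∘X | A_j] = α_j · γ_j + β_j · (1 − γ_j), then the calibrator is perfectly calibrated: CE(g) = 0. -/
open MeasureTheory

/-- Conditional probability of `E` given the event `A`, taken to be `0` when `A` is `μ`-null. -/
noncomputable def condProbE {Ω : Type*} [MeasurableSpace Ω] (μ : Measure Ω)
    (E A : Set Ω) : ℝ :=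
  if μ A = 0 then 0 else (μ (E ∩ A)).toReal / (μ A).toReal

/-- Conditional expectation of `h` given the event `A`, taken to be `0` when `A` is `μ`-null. -/
noncomputable def condMeanE {Ω : Type*} [MeasurableSpace Ω] (μ : Measure Ω)
    (h : Ω → ℝ) (A : Set Ω) : ℝ :=
  if μ A = 0 then 0 else (∫ ω in A, h ω ∂μ) / (μ A).toReal

/-!
In every bin, the right-hand side of the hypothesis is the law of total probability for the
event `f ∘ X = Y` given the bin, split according to whether the transformation preserves the
prediction. So the hypothesis says that the average confidence equals the accuracy in every bin,
and each summand of the calibration error vanishes.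
-/

section

variable {Ω : Type*} [MeasurableSpace Ω] {μ : Measure Ω} [IsFiniteMeasure μ]

theorem measureReal_inter_add_compl_inter {E : Set Ω} (hE : NullMeasurableSet E μ) (S : Set Ω) :
    μ.real (E ∩ S) + μ.real (Eᶜ ∩ S) = μ.real S := by
  rw [Set.inter_comm, ← Set.sdiff_eq_compl_inter]
  exact measureReal_inter_add_sdiff₀ hE

theorem condProbE_mul_measureReal (C A : Set Ω) :
    condProbE μ C A * μ.real A = μ.real (C ∩ A) := by
  unfold condProbE
  split_ifs with hA
  · simp [measureReal_def, measure_mono_null Set.inter_subset_right hA]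
  · exact div_mul_cancel₀ _ ((measureReal_ne_zero_iff).mpr hA)

theorem condProbE_inter_mul_add_compl_inter_mul_one_sub (C : Set Ω) {E : Set Ω}
    (hE : NullMeasurableSet E μ) (A : Set Ω) :
    condProbE μ C (E ∩ A) * condProbE μ E A + condProbE μ C (Eᶜ ∩ A) * (1 - condProbE μ E A) =
      condProbE μ C A := by
  by_cases hA : μ A = 0
  · simp [condProbE, hA, measure_mono_null Set.inter_subset_right hA]
  apply mul_right_cancel₀ ((measureReal_ne_zero_iff).mpr hA)
  have hsplit := measureReal_inter_add_compl_inter hE (C ∩ A)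
  rw [Set.inter_left_comm E, Set.inter_left_comm Eᶜ] at hsplit
  calc (condProbE μ C (E ∩ A) * condProbE μ E A +
          condProbE μ C (Eᶜ ∩ A) * (1 - condProbE μ E A)) * μ.real A
      = condProbE μ C (E ∩ A) * μ.real (E ∩ A) + condProbE μ C (Eᶜ ∩ A) * μ.real (Eᶜ ∩ A) := by
        linear_combination (condProbE μ C (E ∩ A) - condProbE μ C (Eᶜ ∩ A)) *
            condProbE_mul_measureReal (μ := μ) E A -
          condProbE μ C (Eᶜ ∩ A) * measureReal_inter_add_compl_inter hE A
    _ = condProbE μ C A * μ.real A := by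
        rw [condProbE_mul_measureReal, condProbE_mul_measureReal, condProbE_mul_measureReal,
          hsplit]

end

theorem sufficiency_for_perfect_calibration_general
    {Ω 𝒳 𝒴 : Type*} [MeasurableSpace Ω] [MeasurableSpace 𝒳] [MeasurableSpace 𝒴]
    [Countable 𝒴] [MeasurableSingletonClass 𝒴]
    (μ : Measure Ω) [IsProbabilityMeasure μ]
    (X : Ω → 𝒳) (Y : Ω → 𝒴) (f : 𝒳 → 𝒴) (g : 𝒳 → ℝ)
    (hX : Measurable X) (hf : Measurable f)
    (J : ℕ) (P : Fin J → Set ℝ)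
    (X' : Ω → 𝒳) (hX' : Measurable X')
    (hsuff : ∀ j : Fin J,
      condMeanE μ (fun ω => g (X ω)) {ω | g (X ω) ∈ P j} =
        condProbE μ {ω | f (X ω) = Y ω}
            ({ω | f (X' ω) = f (X ω)} ∩ {ω | g (X ω) ∈ P j}) *
          condProbE μ {ω | f (X' ω) = f (X ω)} {ω | g (X ω) ∈ P j} +
        condProbE μ {ω | f (X ω) = Y ω}
            ({ω | f (X' ω) = f (X ω)}ᶜ ∩ {ω | g (X ω) ∈ P j}) *
          (1 - condProbE μ {ω | f (X' ω) = f (X ω)} {ω | g (X ω) ∈ P j})) :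
    (∑ j : Fin J, (μ {ω | g (X ω) ∈ P j}).toReal *
        |condProbE μ {ω | f (X ω) = Y ω} {ω | g (X ω) ∈ P j} -
          condMeanE μ (fun ω => g (X ω)) {ω | g (X ω) ∈ P j}|) = 0 := by
  have hE : MeasurableSet {ω | f (X' ω) = f (X ω)} :=
    measurableSet_eq_fun (hf.comp hX') (hf.comp hX)
  refine Finset.sum_eq_zero fun j _ => ?_
  rw [hsuff j, condProbE_inter_mul_add_compl_inter_mul_one_sub _ hE.nullMeasurableSet,
    sub_self, abs_zero, mul_zero]

/-- Sufficiency for perfect calibration (Theorem 1): if for every bin index `j` the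
bin-conditional average confidence matches the transformation decomposition,
`E[g∘X | A_j] = α_j γ_j + β_j (1 - γ_j)`, then the calibrator is perfectly calibrated:
`CE(g) = Σ_j μ(A_j) · |μ[f∘X = Y | A_j] - E[g∘X | A_j]| = 0`. -/
theorem sufficiency_for_perfect_calibration
    {Ω 𝒳 𝒴 : Type*} [MeasurableSpace Ω] [MeasurableSpace 𝒳] [MeasurableSpace 𝒴]
    [Countable 𝒴] [MeasurableSingletonClass 𝒴]
    (μ : Measure Ω) [IsProbabilityMeasure μ]
    (X : Ω → 𝒳) (Y : Ω → 𝒴) (f : 𝒳 → 𝒴) (g : 𝒳 → ℝ)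
    (hX : Measurable X) (hY : Measurable Y) (hf : Measurable f) (hg : Measurable g)
    (hg01 : ∀ s, g s ∈ Set.Icc (0 : ℝ) 1)
    (J : ℕ) (hJ : 0 < J) (P : Fin J → Set ℝ)
    (hPmeas : ∀ j, MeasurableSet (P j))
    (hPdisj : Pairwise (Function.onFun Disjoint P))
    (hPcover : Set.Icc (0 : ℝ) 1 ⊆ ⋃ j, P j)
    (X' : Ω → 𝒳) (hX' : Measurable X')
    (hsuff : ∀ j : Fin J,
      condMeanE μ (fun ω => g (X ω)) {ω | g (X ω) ∈ P j} =
        condProbE μ {ω | f (X ω) = Y ω}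
            ({ω | f (X' ω) = f (X ω)} ∩ {ω | g (X ω) ∈ P j}) *
          condProbE μ {ω | f (X' ω) = f (X ω)} {ω | g (X ω) ∈ P j} +
        condProbE μ {ω | f (X ω) = Y ω}
            ({ω | f (X' ω) = f (X ω)}ᶜ ∩ {ω | g (X ω) ∈ P j}) *
          (1 - condProbE μ {ω | f (X' ω) = f (X ω)} {ω | g (X ω) ∈ P j})) :
    (∑ j : Fin J, (μ {ω | g (X ω) ∈ P j}).toReal *
        |condProbE μ {ω | f (X ω) = Y ω} {ω | g (X ω) ∈ P j} -
          condMeanE μ (fun ω => g (X ω)) {ω | g (X ω) ∈ P j}|) = 0 :=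
  sufficiency_for_perfect_calibration_general μ X Y f g hX hf J P X' hX' hsuff
end

section
/- Generalization bound on the calibration error (Theorem 2): let (X_1, Y_1), …, (X_N, Y_N) be i.i.d. samples whose common law equals the law of (X, Y) under μ, defined on a probability space (Ω', ℙ). Define the random empirical quantities I_j = {n ∈ {1,…,N} : g(X_n) ∈ P_j}, ŵ_j = |I_j| / N, ê_j = (1/|I_j|) Σ_{n ∈ I_j} (1{Y_n = f(X_n)} − g(X_n)) when I_j ≠ ∅ and ê_j = 0 otherwise, and ECE_Z(g) = Σ_{j=1}^J ŵ_j |ê_j|. Then for every δ ∈ (0, 1), with probability at least 1 − δ over the sample, CE(g) ≤ ECE_Z(g) + (J·√2/√N) · √(2·ln 2 − ln δ). -/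
open MeasureTheory

open Classical in
/-- The random set of sample indices whose confidence falls in the bin `Pj`. -/
noncomputable def binIndices {𝒳 𝒴 Ω' : Type*} (g : 𝒳 → ℝ) (Pj : Set ℝ) (N : ℕ)
    (W : Fin N → Ω' → 𝒳 × 𝒴) (ω' : Ω') : Finset (Fin N) :=
  Finset.univ.filter (fun n => g (W n ω').1 ∈ Pj)

/-- The empirical bin weight `ŵ_j = |I_j| / N`. -/
noncomputable def empWeight {𝒳 𝒴 Ω' : Type*} (g : 𝒳 → ℝ) (Pj : Set ℝ) (N : ℕ)
    (W : Fin N → Ω' → 𝒳 × 𝒴) (ω' : Ω') : ℝ :=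
  ((binIndices g Pj N W ω').card : ℝ) / (N : ℝ)

open Classical in
/-- The empirical per-bin calibration gap
`ê_j = |I_j|⁻¹ Σ_{n ∈ I_j} (1{Y_n = f(X_n)} - g(X_n))`, set to `0` when `I_j = ∅`. -/
noncomputable def empGap {𝒳 𝒴 Ω' : Type*} (f : 𝒳 → 𝒴) (g : 𝒳 → ℝ) (Pj : Set ℝ) (N : ℕ)
    (W : Fin N → Ω' → 𝒳 × 𝒴) (ω' : Ω') : ℝ :=
  if (binIndices g Pj N W ω').card = 0 then 0
  else (∑ n ∈ binIndices g Pj N W ω',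
      ((if (W n ω').2 = f (W n ω').1 then (1 : ℝ) else 0) - g (W n ω').1)) /
    ((binIndices g Pj N W ω').card : ℝ)

/-!
With `r_j(x, y) = 1{g x ∈ P_j} (1{y = f x} - g x)`, the `j`-th summand of `CE(g)` is `|E r_j|` and
that of `ECE_Z(g)` is `|N⁻¹ ∑ₙ r_j(Xₙ, Yₙ)|`, so by the triangle inequality `CE(g) - ECE_Z(g)` is at
most `N⁻¹ ∑_j |∑ₙ (r_j(Xₙ, Yₙ) - E r_j)|`. Writing this as `N⁻¹ ∑ₙ (φ_s(Xₙ, Yₙ) - E φ_s)` for the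
sign vector `s` of the deviations, where `φ_s = ∑_j s_j r_j`, and using that the bins are disjoint,
so that `φ_s` takes values in `[-1, 1]`, Hoeffding's inequality and a union bound over the `3 ^ J`
sign vectors show that the deviation exceeds `ε = J √(2 L / N)`, `L = 2 log 2 - log δ`, with
probability at most `3 ^ J exp (-J² L) ≤ δ`.
-/

open ProbabilityTheory Real

section Hoeffding

variable {Ω κ : Type*} [MeasurableSpace Ω] {Pr : Measure Ω} [IsProbabilityMeasure Pr]
  [Fintype κ]

theorem measureReal_sum_sub_integral_ge_le {U : κ → Ω → ℝ} (hindep : iIndepFun U Pr)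
    (hU : ∀ i, Measurable (U i)) (hb : ∀ i ω, |U i ω| ≤ 1) {t : ℝ} (ht : 0 ≤ t) :
    Pr.real {ω | t ≤ ∑ i, (U i ω - ∫ ω, U i ω ∂Pr)} ≤ exp (-t ^ 2 / (2 * Fintype.card κ)) := by
  have hsubG : ∀ i ∈ Finset.univ,
      HasSubgaussianMGF (fun ω => U i ω - ∫ ω, U i ω ∂Pr) ((‖(1 : ℝ) - (-1)‖₊ / 2) ^ 2) Pr :=
    fun i _ => hasSubgaussianMGF_of_mem_Icc (hU i).aemeasurable
      (ae_of_all _ fun ω => abs_le.mp (hb i ω))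
  have hcentered : iIndepFun (fun i ω => U i ω - ∫ ω, U i ω ∂Pr) Pr :=
    hindep.comp (fun i x => x - ∫ ω, U i ω ∂Pr) (fun i => measurable_id.sub_const _)
  have h := HasSubgaussianMGF.measure_sum_ge_le_of_iIndepFun hcentered hsubG ht
  have hc : ((‖(1 : ℝ) - (-1)‖₊ / 2) ^ 2 : NNReal) = 1 := by
    norm_num
  simpa only [hc, Finset.sum_const, Finset.card_univ, nsmul_eq_mul, mul_one,
    NNReal.coe_natCast] using h

end Hoeffding

section SignVectors

variable {Ω α ι κ : Type*} [Fintype ι]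

theorem abs_sum_sign_mul_le {h : ι → α → ℝ} (hb : ∀ a, ∑ j, |h j a| ≤ 1) (s : ι → SignType)
    (a : α) : |∑ j, (s j : ℝ) * h j a| ≤ 1 := by
  refine (Finset.abs_sum_le_sum_abs _ _).trans (le_trans ?_ (hb a))
  refine Finset.sum_le_sum fun j _ => ?_
  rw [abs_mul]
  exact mul_le_of_le_one_left (abs_nonneg _) (by cases s j <;> simp)

theorem measureReal_sum_abs_sum_sub_integral_ge_le [MeasurableSpace Ω] [MeasurableSpace α]
    {Pr : Measure Ω} [IsProbabilityMeasure Pr] [Fintype κ] {h : ι → α → ℝ}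
    (hh : ∀ j, Measurable (h j)) (hb : ∀ a, ∑ j, |h j a| ≤ 1) {ν : Measure α}
    {W : κ → Ω → α} (hW : ∀ n, Measurable (W n))
    (hindep : iIndepFun W Pr) (hlaw : ∀ n, Pr.map (W n) = ν) {t : ℝ} (ht : 0 ≤ t) :
    Pr.real {ω | t ≤ ∑ j, |∑ n, (h j (W n ω) - ∫ a, h j a ∂ν)|} ≤
      3 ^ Fintype.card ι * exp (-t ^ 2 / (2 * Fintype.card κ)) := by
  classical
  set φ : (ι → SignType) → α → ℝ := fun s a => ∑ j, (s j : ℝ) * h j a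
  have hφ : ∀ s, Measurable (φ s) := fun s => by fun_prop
  have hmean : ∀ s n, ∫ ω, φ s (W n ω) ∂Pr = ∑ j, (s j : ℝ) * ∫ a, h j a ∂ν := by
    intro s n
    have : IsProbabilityMeasure ν := hlaw n ▸ Measure.isProbabilityMeasure_map (hW n).aemeasurable
    have hint : ∀ j, Integrable (h j) ν := fun j =>
      (integrable_const 1).mono' (hh j).aestronglyMeasurable (ae_of_all _ fun a =>
        (Finset.single_le_sum (fun i _ => abs_nonneg (h i a)) (Finset.mem_univ j)).trans (hb a))
    rw [← integral_map (hW n).aemeasurable (hφ s).aestronglyMeasurable, hlaw n,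
      integral_finsetSum _ fun j _ => (hint j).const_mul _]
    simp only [integral_const_mul]
  have hcover : {ω | t ≤ ∑ j, |∑ n, (h j (W n ω) - ∫ a, h j a ∂ν)|} ⊆
      ⋃ s, {ω | t ≤ ∑ n, (φ s (W n ω) - ∫ ω, φ s (W n ω) ∂Pr)} := by
    intro ω hω
    set y : ι → ℝ := fun j => ∑ n, (h j (W n ω) - ∫ a, h j a ∂ν)
    refine Set.mem_iUnion.mpr ⟨fun j => SignType.sign (y j), ?_⟩
    have hsum : ∑ n, (φ (fun j => SignType.sign (y j)) (W n ω) -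
        ∑ j, (SignType.sign (y j) : ℝ) * ∫ a, h j a ∂ν) = ∑ j, |y j| := by
      simp only [φ, y, ← sign_mul_self, ← Finset.sum_sub_distrib, ← mul_sub, Finset.mul_sum]
      exact Finset.sum_comm
    simpa only [Set.mem_ofPred_eq, hmean, hsum] using hω
  calc _ ≤ Pr.real (⋃ s, {ω | t ≤ ∑ n, (φ s (W n ω) - ∫ ω, φ s (W n ω) ∂Pr)}) :=
        measureReal_mono hcover
    _ ≤ ∑ s, Pr.real {ω | t ≤ ∑ n, (φ s (W n ω) - ∫ ω, φ s (W n ω) ∂Pr)} :=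
        measureReal_iUnion_fintype_le _
    _ ≤ ∑ _s : ι → SignType, exp (-t ^ 2 / (2 * Fintype.card κ)) :=
        Finset.sum_le_sum fun s _ => measureReal_sum_sub_integral_ge_le
          (hindep.comp (fun _ => φ s) fun _ => hφ s) (fun n => (hφ s).comp (hW n))
          (fun n ω => abs_sum_sign_mul_le hb s _) ht
    _ = 3 ^ Fintype.card ι * exp (-t ^ 2 / (2 * Fintype.card κ)) := by
        simp [show Fintype.card SignType = 3 from rfl]

end SignVectors

theorem sum_abs_le_sum_abs_sum_div_add {ι κ : Type*} [Fintype ι] [Fintype κ] [Nonempty κ]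
    (m : ι → ℝ) (u : ι → κ → ℝ) :
    ∑ j, |m j| ≤ ∑ j, |∑ n, u j n| / Fintype.card κ +
      (∑ j, |∑ n, (u j n - m j)|) / Fintype.card κ := by
  have hcard : (0 : ℝ) < Fintype.card κ := by exact_mod_cast Fintype.card_pos
  rw [← Finset.sum_div, ← add_div, le_div_iff₀ hcard, Finset.sum_mul, ← Finset.sum_add_distrib]
  refine Finset.sum_le_sum fun j _ => ?_
  have hdev : ∑ n, (u j n - m j) = ∑ n, u j n - Fintype.card κ * m j := by
    simp [Finset.sum_sub_distrib]
  calc |m j| * Fintype.card κ = |∑ n, u j n - ∑ n, (u j n - m j)| := by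
        rw [hdev, sub_sub_cancel, abs_mul, abs_of_pos hcard, mul_comm]
    _ ≤ |∑ n, u j n| + |∑ n, (u j n - m j)| := abs_sub _ _

theorem one_sub_ofReal_le_measure {Ω : Type*} [MeasurableSpace Ω] {μ : Measure Ω}
    [IsProbabilityMeasure μ] {A B : Set Ω} {δ : ℝ} (hB : μ.real B ≤ δ) (hBA : Bᶜ ⊆ A) :
    1 - ENNReal.ofReal δ ≤ μ A := by
  have hcover : (1 : ENNReal) ≤ μ A + μ B := by
    rw [← measure_univ (μ := μ)]
    refine (measure_mono fun ω _ => ?_).trans (measure_union_le A B)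
    by_cases hω : ω ∈ B
    exacts [Or.inr hω, Or.inl (hBA hω)]
  rw [tsub_le_iff_right]
  refine hcover.trans (add_le_add_right ?_ _)
  rw [← ofReal_measureReal]
  exact ENNReal.ofReal_le_ofReal hB

theorem three_pow_mul_exp_neg_le {J : ℕ} (hJ : 0 < J) {δ : ℝ} (hδ : δ ∈ Set.Ioo (0 : ℝ) 1) :
    3 ^ J * exp (-(J ^ 2 * (2 * log 2 - log δ))) ≤ δ := by
  have hJ1 : (1 : ℝ) ≤ J := by exact_mod_cast hJ
  have hlogδ : log δ < 0 := log_neg hδ.1 hδ.2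
  have hlog3 : log 3 ≤ 2 * log 2 := by
    rw [← log_rpow two_pos]
    exact log_le_log (by norm_num) (by norm_num)
  calc (3 : ℝ) ^ J * exp (-(J ^ 2 * (2 * log 2 - log δ)))
      = exp (J * log 3 - J ^ 2 * (2 * log 2 - log δ)) := by
        rw [exp_sub, exp_nat_mul, exp_log (by norm_num), exp_neg, div_eq_mul_inv]
    _ ≤ exp (log δ) := exp_le_exp.mpr (by
        nlinarith [mul_le_mul_of_nonneg_left hlog3 (by positivity : (0 : ℝ) ≤ J),
          mul_nonneg (sub_nonneg.mpr hJ1) (by positivity : (0 : ℝ) ≤ J * (2 * log 2)),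
          mul_nonneg (by nlinarith : (0 : ℝ) ≤ J ^ 2 - 1) (neg_nonneg.mpr hlogδ.le)])
    _ = δ := exp_log hδ.1

section Calibration

variable {Ω 𝒳 𝒴 : Type*}

open Classical in
noncomputable def binResidual (f : 𝒳 → 𝒴) (g : 𝒳 → ℝ) (Pj : Set ℝ) (q : 𝒳 × 𝒴) : ℝ :=
  if g q.1 ∈ Pj then (if q.2 = f q.1 then 1 else 0) - g q.1 else 0

theorem measurable_binResidual [MeasurableSpace 𝒳] [MeasurableSpace 𝒴] [MeasurableEq 𝒴]
    {f : 𝒳 → 𝒴} {g : 𝒳 → ℝ} {Pj : Set ℝ} (hf : Measurable f) (hg : Measurable g)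
    (hPj : MeasurableSet Pj) : Measurable (binResidual f g Pj) := by
  refine Measurable.ite (hg.comp measurable_fst hPj) (Measurable.sub ?_ (by fun_prop))
    measurable_const
  exact Measurable.ite (measurableSet_eq_fun measurable_snd (hf.comp measurable_fst))
    measurable_const measurable_const

theorem sum_abs_binResidual_le {ι : Type*} [Fintype ι] {f : 𝒳 → 𝒴} {g : 𝒳 → ℝ}
    (hg : ∀ x, g x ∈ Set.Icc (0 : ℝ) 1) {P : ι → Set ℝ} (hP : Pairwise (Function.onFun Disjoint P))
    (q : 𝒳 × 𝒴) : ∑ j, |binResidual f g (P j) q| ≤ 1 := by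
  classical
  set r : ℝ := |(if q.2 = f q.1 then 1 else 0) - g q.1|
  have hr : r ≤ 1 := by
    obtain ⟨hg0, hg1⟩ := hg q.1
    refine abs_le.mpr ⟨?_, ?_⟩ <;> split_ifs <;> linarith
  have hbin : ∀ j, |binResidual f g (P j) q| = (P j).indicator (fun _ => r) (g q.1) := by
    intro j
    by_cases h : g q.1 ∈ P j <;> simp [binResidual, r, h]
  simp only [hbin]
  rw [← Finset.indicator_biUnion_apply _ _ (hP.set_pairwise _)]
  exact (Set.indicator_le_self' (fun _ _ => abs_nonneg _) _).trans hr

theorem toReal_mul_abs_condProbE_sub_condMeanE [MeasurableSpace Ω] {μ : Measure Ω}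
    [IsFiniteMeasure μ] (E A : Set Ω) (h : Ω → ℝ) :
    (μ A).toReal * |condProbE μ E A - condMeanE μ h A| =
      |μ.real (E ∩ A) - ∫ ω in A, h ω ∂μ| := by
  by_cases hA : μ A = 0
  · have hEA : μ (E ∩ A) = 0 := measure_mono_null Set.inter_subset_right hA
    simp [condProbE, condMeanE, hA, hEA, measureReal_def, Measure.restrict_eq_zero.mpr hA]
  · have hpos : 0 < (μ A).toReal := ENNReal.toReal_pos hA (measure_ne_top μ A)
    rw [condProbE, condMeanE, if_neg hA, if_neg hA, div_sub_div_same, abs_div,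
      abs_of_pos hpos, mul_div_cancel₀ _ hpos.ne', measureReal_def]

theorem integral_binResidual_comp [MeasurableSpace Ω] [MeasurableSpace 𝒳] [MeasurableSpace 𝒴]
    [MeasurableEq 𝒴] {μ : Measure Ω} [IsFiniteMeasure μ] {X : Ω → 𝒳} {Y : Ω → 𝒴}
    {f : 𝒳 → 𝒴} {g : 𝒳 → ℝ} {Pj : Set ℝ} (hX : Measurable X) (hY : Measurable Y)
    (hf : Measurable f) (hg : Measurable g) (hPj : MeasurableSet Pj)
    (hgX : Integrable (fun ω => g (X ω)) μ) :
    ∫ ω, binResidual f g Pj (X ω, Y ω) ∂μ =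
      μ.real ({ω | f (X ω) = Y ω} ∩ {ω | g (X ω) ∈ Pj}) -
        ∫ ω in {ω | g (X ω) ∈ Pj}, g (X ω) ∂μ := by
  classical
  have hE : MeasurableSet {ω | f (X ω) = Y ω} := measurableSet_eq_fun (hf.comp hX) hY
  have hA : MeasurableSet {ω | g (X ω) ∈ Pj} := hg.comp hX hPj
  have hind : (fun ω => binResidual f g Pj (X ω, Y ω)) = {ω | g (X ω) ∈ Pj}.indicator
      (fun ω => {ω | f (X ω) = Y ω}.indicator 1 ω - g (X ω)) := by
    ext ω
    by_cases h : g (X ω) ∈ Pj <;> simp [binResidual, Set.indicator_apply, h, eq_comm]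
  have hEint : Integrable ({ω | f (X ω) = Y ω}.indicator (1 : Ω → ℝ)) μ :=
    (integrable_const 1).indicator hE
  rw [hind, integral_indicator hA, integral_sub hEint.restrict hgX.restrict,
    integral_indicator_one hE, measureReal_restrict_apply hE]

theorem toReal_mul_abs_condProbE_sub_condMeanE_eq_abs_integral_binResidual [MeasurableSpace Ω]
    [MeasurableSpace 𝒳] [MeasurableSpace 𝒴] [MeasurableEq 𝒴] {μ : Measure Ω}
    [IsFiniteMeasure μ] {X : Ω → 𝒳} {Y : Ω → 𝒴} {f : 𝒳 → 𝒴} {g : 𝒳 → ℝ} {Pj : Set ℝ}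
    (hX : Measurable X) (hY : Measurable Y) (hf : Measurable f) (hg : Measurable g)
    (hPj : MeasurableSet Pj) (hgX : Integrable (fun ω => g (X ω)) μ) :
    (μ {ω | g (X ω) ∈ Pj}).toReal *
        |condProbE μ {ω | f (X ω) = Y ω} {ω | g (X ω) ∈ Pj} -
          condMeanE μ (fun ω => g (X ω)) {ω | g (X ω) ∈ Pj}| =
      |∫ q, binResidual f g Pj q ∂(μ.map fun ω => (X ω, Y ω))| := by
  rw [toReal_mul_abs_condProbE_sub_condMeanE, integral_map (hX.prodMk hY).aemeasurable
    (measurable_binResidual hf hg hPj).aestronglyMeasurable,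
    integral_binResidual_comp hX hY hf hg hPj hgX]

theorem empWeight_mul_abs_empGap {Ω' : Type*} (f : 𝒳 → 𝒴) (g : 𝒳 → ℝ) (Pj : Set ℝ) (N : ℕ)
    (W : Fin N → Ω' → 𝒳 × 𝒴) (ω' : Ω') :
    empWeight g Pj N W ω' * |empGap f g Pj N W ω'| =
      |∑ n, binResidual f g Pj (W n ω')| / N := by
  classical
  have hsum : ∑ n ∈ binIndices g Pj N W ω',
      ((if (W n ω').2 = f (W n ω').1 then (1 : ℝ) else 0) - g (W n ω').1) =
        ∑ n, binResidual f g Pj (W n ω') := by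
    rw [binIndices, Finset.sum_filter]
    rfl
  rw [empWeight, empGap]
  split_ifs with hc
  · rw [← hsum, Finset.card_eq_zero.mp hc]
    simp
  · rw [hsum, abs_div, Nat.abs_cast]
    field_simp

end Calibration

theorem calibration_error_generalization_bound_general
    {Ω 𝒳 𝒴 : Type*} [MeasurableSpace Ω] [MeasurableSpace 𝒳] [MeasurableSpace 𝒴]
    [Countable 𝒴] [MeasurableSingletonClass 𝒴]
    (μ : Measure Ω) [IsProbabilityMeasure μ]
    (X : Ω → 𝒳) (Y : Ω → 𝒴) (f : 𝒳 → 𝒴) (g : 𝒳 → ℝ)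
    (hX : Measurable X) (hY : Measurable Y) (hf : Measurable f) (hg : Measurable g)
    (hg01 : ∀ s, g s ∈ Set.Icc (0 : ℝ) 1)
    (J : ℕ) (hJ : 0 < J) (P : Fin J → Set ℝ)
    (hPmeas : ∀ j, MeasurableSet (P j))
    (hPdisj : Pairwise (Function.onFun Disjoint P))
    {Ω' : Type*} [MeasurableSpace Ω'] (Pr : Measure Ω') [IsProbabilityMeasure Pr]
    (N : ℕ) (hN : 0 < N) (W : Fin N → Ω' → 𝒳 × 𝒴)
    (hWmeas : ∀ n, Measurable (W n))
    (hindep : ProbabilityTheory.iIndepFun W Pr)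
    (hlaw : ∀ n, Measure.map (W n) Pr = Measure.map (fun ω => (X ω, Y ω)) μ)
    (δ : ℝ) (hδ : δ ∈ Set.Ioo (0 : ℝ) 1) :
    1 - ENNReal.ofReal δ ≤
      Pr {ω' |
        (∑ j : Fin J, (μ {ω | g (X ω) ∈ P j}).toReal *
            |condProbE μ {ω | f (X ω) = Y ω} {ω | g (X ω) ∈ P j} -
              condMeanE μ (fun ω => g (X ω)) {ω | g (X ω) ∈ P j}|) ≤
          (∑ j : Fin J, empWeight g (P j) N W ω' * |empGap f g (P j) N W ω'|) +
            ((J : ℝ) * Real.sqrt 2 / Real.sqrt N) *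
              Real.sqrt (2 * Real.log 2 - Real.log δ)} := by
  set ν := μ.map fun ω => (X ω, Y ω)
  set r : Fin J → 𝒳 × 𝒴 → ℝ := fun j => binResidual f g (P j)
  set ε := (J : ℝ) * √2 / √N * √(2 * log 2 - log δ)
  have hNpos : (0 : ℝ) < N := by exact_mod_cast hN
  have hgX : Integrable (fun ω => g (X ω)) μ :=
    (integrable_const 1).mono' (hg.comp hX).aestronglyMeasurable
      (ae_of_all _ fun ω => abs_le.mpr ⟨by linarith [(hg01 (X ω)).1], (hg01 (X ω)).2⟩)
  have hdev : Pr.real {ω' | N * ε ≤ ∑ j, |∑ n, (r j (W n ω') - ∫ q, r j q ∂ν)|} ≤ δ := by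
    refine (measureReal_sum_abs_sum_sub_integral_ge_le
      (fun j => measurable_binResidual hf hg (hPmeas j)) (sum_abs_binResidual_le hg01 hPdisj)
      hWmeas hindep hlaw (by positivity)).trans (le_of_eq_of_le ?_ (three_pow_mul_exp_neg_le hJ hδ))
    have hL : 0 ≤ 2 * log 2 - log δ := by linarith [log_neg hδ.1 hδ.2, log_pos one_lt_two]
    simp only [Fintype.card_fin, ε, mul_pow, div_pow, sq_sqrt hNpos.le, sq_sqrt hL,
      sq_sqrt zero_le_two]
    field_simp
  refine one_sub_ofReal_le_measure hdev fun ω' hω' => ?_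
  simp only [Set.mem_compl_iff, Set.mem_ofPred_eq, not_le] at hω' ⊢
  have : Nonempty (Fin N) := ⟨⟨0, hN⟩⟩
  calc ∑ j, (μ {ω | g (X ω) ∈ P j}).toReal * |condProbE μ {ω | f (X ω) = Y ω} {ω | g (X ω) ∈ P j} -
          condMeanE μ (fun ω => g (X ω)) {ω | g (X ω) ∈ P j}|
      = ∑ j, |∫ q, r j q ∂ν| := Finset.sum_congr rfl fun j _ =>
        toReal_mul_abs_condProbE_sub_condMeanE_eq_abs_integral_binResidual hX hY hf hg
          (hPmeas j) hgX
    _ ≤ ∑ j, |∑ n, r j (W n ω')| / N + (∑ j, |∑ n, (r j (W n ω') - ∫ q, r j q ∂ν)|) / N := by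
        simpa only [Fintype.card_fin] using
          sum_abs_le_sum_abs_sum_div_add (fun j => ∫ q, r j q ∂ν) fun j n => r j (W n ω')
    _ ≤ ∑ j, empWeight g (P j) N W ω' * |empGap f g (P j) N W ω'| + ε := by
        simp only [empWeight_mul_abs_empGap, r]
        gcongr
        rw [div_le_iff₀ hNpos, mul_comm]
        exact hω'.le

/-- Generalization bound on the calibration error (Theorem 2): given i.i.d. samples
`(X_n, Y_n)` with the law of `(X, Y)`, for every `δ ∈ (0,1)`, with probability at least
`1 - δ` over the sample, `CE(g) ≤ ECE_Z(g) + (J√2/√N)·√(2 ln 2 - ln δ)`. -/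
theorem calibration_error_generalization_bound
    {Ω 𝒳 𝒴 : Type*} [MeasurableSpace Ω] [MeasurableSpace 𝒳] [MeasurableSpace 𝒴]
    [Countable 𝒴] [MeasurableSingletonClass 𝒴]
    (μ : Measure Ω) [IsProbabilityMeasure μ]
    (X : Ω → 𝒳) (Y : Ω → 𝒴) (f : 𝒳 → 𝒴) (g : 𝒳 → ℝ)
    (hX : Measurable X) (hY : Measurable Y) (hf : Measurable f) (hg : Measurable g)
    (hg01 : ∀ s, g s ∈ Set.Icc (0 : ℝ) 1)
    (J : ℕ) (hJ : 0 < J) (P : Fin J → Set ℝ)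
    (hPmeas : ∀ j, MeasurableSet (P j))
    (hPdisj : Pairwise (Function.onFun Disjoint P))
    (hPcover : Set.Icc (0 : ℝ) 1 ⊆ ⋃ j, P j)
    {Ω' : Type*} [MeasurableSpace Ω'] (Pr : Measure Ω') [IsProbabilityMeasure Pr]
    (N : ℕ) (hN : 0 < N) (W : Fin N → Ω' → 𝒳 × 𝒴)
    (hWmeas : ∀ n, Measurable (W n))
    (hindep : ProbabilityTheory.iIndepFun W Pr)
    (hlaw : ∀ n, Measure.map (W n) Pr = Measure.map (fun ω => (X ω, Y ω)) μ)
    (δ : ℝ) (hδ : δ ∈ Set.Ioo (0 : ℝ) 1) :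
    1 - ENNReal.ofReal δ ≤
      Pr {ω' |
        (∑ j : Fin J, (μ {ω | g (X ω) ∈ P j}).toReal *
            |condProbE μ {ω | f (X ω) = Y ω} {ω | g (X ω) ∈ P j} -
              condMeanE μ (fun ω => g (X ω)) {ω | g (X ω) ∈ P j}|) ≤
          (∑ j : Fin J, empWeight g (P j) N W ω' * |empGap f g (P j) N W ω'|) +
            ((J : ℝ) * Real.sqrt 2 / Real.sqrt N) *
              Real.sqrt (2 * Real.log 2 - Real.log δ)} :=
  calibration_error_generalization_bound_general μ X Y f g hX hY hf hg hg01 J hJ P hPmeas hPdisj Pr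
    N hN W hWmeas hindep hlaw δ hδ
end
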